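/- arXiv:2110.03812 — 2 statements merged into one kernel-verified Lean document; each statement's English description precedes it below -/
import Mathlib

section
/- Let D be a finite simple digraph on a finite vertex type V. Then a real number λ is a complementarity eigenvalue of D if and only if there exists a nonempty subset S of V such that the induced subdigraph D[S] is strongly connected and λ equals the spectral radius of the principal submatrix A(D)_S of the adjacency matrix with rows and columns indexed by S. In other words, Π(D) = { ρ(H) : H an induced strongly connected subdigraph of D }. -/
open Matrix Polynomial

/-- `lam` is a complementarity eigenvalue of the real square matrix `A`. -/
def isComplEig {V : Type*} [Fintype V] (A : Matrix V V ℝ) (lam : ℝ) : Prop :=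
  ∃ x : V → ℝ, x ≠ 0 ∧ 0 ≤ x ∧ 0 ≤ A.mulVec x - lam • x ∧
    ∑ i, x i * (A.mulVec x - lam • x) i = 0

/-- Spectral radius of a real square matrix: supremum of the norms of the
complex eigenvalues of its complexification. -/
noncomputable def specRad {V : Type*} [Fintype V] [DecidableEq V] (B : Matrix V V ℝ) : ℝ :=
  sSup ((fun μ : ℂ => ‖μ‖) '' spectrum ℂ (B.map (Complex.ofReal : ℝ → ℂ)))

-- Adjacency matrix of a digraph given by its arc relation.
open scoped Classical in
noncomputable def adjMat {V : Type*} (adj : V → V → Prop) : Matrix V V ℝ :=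
  Matrix.of fun i j => if adj i j then 1 else 0

/-- Principal submatrix of `A` with rows and columns indexed by `S`. -/
def psub {V : Type*} (A : Matrix V V ℝ) (S : Finset V) : Matrix S S ℝ :=
  A.submatrix Subtype.val Subtype.val

/- ### Auxiliary results -/

theorem PF.mem_spec_iff {n : Type*} [Fintype n] [DecidableEq n] (M : Matrix n n ℂ) (μ : ℂ) :
    μ ∈ spectrum ℂ M ↔ ∃ y : n → ℂ, y ≠ 0 ∧ M.mulVec y = μ • y := by
  rw [spectrum.mem_iff]
  constructor
  · intro h
    have hdet : (algebraMap ℂ (Matrix n n ℂ) μ - M).det = 0 := by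
      by_contra hd
      exact h ((Matrix.isUnit_iff_isUnit_det _).2 (isUnit_iff_ne_zero.2 hd))
    obtain ⟨v, hv0, hv⟩ := (Matrix.exists_mulVec_eq_zero_iff).2 hdet
    refine ⟨v, hv0, ?_⟩
    rw [Matrix.sub_mulVec] at hv
    have h2 : (algebraMap ℂ (Matrix n n ℂ) μ).mulVec v = μ • v := by
      rw [Algebra.algebraMap_eq_smul_one, Matrix.smul_mulVec, Matrix.one_mulVec]
    rw [h2] at hv
    exact (sub_eq_zero.mp hv).symm
  · rintro ⟨y, hy0, hy⟩
    intro hu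
    have hdet : (algebraMap ℂ (Matrix n n ℂ) μ - M).det ≠ 0 :=
      isUnit_iff_ne_zero.1 ((Matrix.isUnit_iff_isUnit_det _).1 hu)
    apply hdet
    apply (Matrix.exists_mulVec_eq_zero_iff).1
    refine ⟨y, hy0, ?_⟩
    rw [Matrix.sub_mulVec, Algebra.algebraMap_eq_smul_one, Matrix.smul_mulVec,
      Matrix.one_mulVec, hy, sub_self]

/-- A nonnegative matrix with a positive eigenvector has that (necessarily nonnegative)
eigenvalue as its spectral radius. -/
theorem PF.lemA {n : Type*} [Fintype n] [DecidableEq n] [Nonempty n] (B : Matrix n n ℝ)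
    (hB : ∀ i j, 0 ≤ B i j) (x : n → ℝ) (hx : ∀ i, 0 < x i) (t : ℝ)
    (ht : B.mulVec x = t • x) : specRad B = t := by
  have ht0 : 0 ≤ t := by
    obtain ⟨i⟩ := ‹Nonempty n›
    have h1 : 0 ≤ (B.mulVec x) i := Finset.sum_nonneg fun j _ => mul_nonneg (hB i j) (hx j).le
    rw [ht] at h1
    exact (mul_nonneg_iff_of_pos_right (hx i)).mp h1
  set M := B.map (Complex.ofReal : ℝ → ℂ) with hM
  have hts : (t : ℂ) ∈ spectrum ℂ M := by
    rw [PF.mem_spec_iff]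
    refine ⟨fun i => (x i : ℂ), ?_, ?_⟩
    · intro h
      obtain ⟨i⟩ := ‹Nonempty n›
      have := congrFun h i
      simp only [Pi.zero_apply, Complex.ofReal_eq_zero] at this
      exact (hx i).ne' this
    · funext i
      have hbx : (B.mulVec x) i = t * x i := by rw [ht]; rfl
      simp only [Matrix.mulVec, dotProduct, hM, Matrix.map_apply, Pi.smul_apply,
        smul_eq_mul]
      rw [show ∑ j, (B i j : ℂ) * (x j : ℂ) = ((∑ j, B i j * x j : ℝ) : ℂ) by push_cast; ring]
      rw [show (∑ j, B i j * x j) = t * x i from hbx]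
      push_cast; ring
  have hbound : ∀ μ ∈ spectrum ℂ M, ‖μ‖ ≤ t := by
    intro μ hμ
    obtain ⟨y, hy0, hy⟩ := (PF.mem_spec_iff M μ).mp hμ
    set z : n → ℝ := fun i => ‖y i‖ with hz
    obtain ⟨i0, -, hi0⟩ := Finset.exists_max_image Finset.univ (fun i => z i / x i)
      Finset.univ_nonempty
    set c := z i0 / x i0 with hc
    have hzle : ∀ j, z j ≤ c * x j := fun j =>
      (div_le_iff₀ (hx j)).mp (hi0 j (Finset.mem_univ j))
    have hc0 : 0 < c := by
      obtain ⟨j, hj⟩ := Function.ne_iff.mp hy0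
      have : 0 < z j := norm_pos_iff.mpr hj
      calc (0:ℝ) < z j / x j := div_pos this (hx j)
        _ ≤ c := hi0 j (Finset.mem_univ j)
    have hzi0 : 0 < z i0 := by
      have : c * x i0 = z i0 := div_mul_cancel₀ _ (hx i0).ne'
      rw [← this]; exact mul_pos hc0 (hx i0)
    have key : ‖μ‖ * z i0 ≤ t * z i0 := by
      have h1 : μ * y i0 = (M.mulVec y) i0 := by rw [hy]; rfl
      have h2 : ‖μ * y i0‖ = ‖μ‖ * z i0 := norm_mul _ _
      rw [← h2, h1]
      have h3 : (M.mulVec y) i0 = ∑ j, (B i0 j : ℂ) * y j := by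
        simp [Matrix.mulVec, dotProduct, hM]
      rw [h3]
      calc ‖∑ j, (B i0 j : ℂ) * y j‖ ≤ ∑ j, ‖(B i0 j : ℂ) * y j‖ := norm_sum_le _ _
        _ = ∑ j, B i0 j * z j := by
            apply Finset.sum_congr rfl; intro j _
            rw [norm_mul, Complex.norm_real, Real.norm_eq_abs, abs_of_nonneg (hB i0 j)]
        _ ≤ ∑ j, B i0 j * (c * x j) :=
            Finset.sum_le_sum fun j _ => mul_le_mul_of_nonneg_left (hzle j) (hB i0 j)
        _ = c * ∑ j, B i0 j * x j := by
            rw [Finset.mul_sum]; apply Finset.sum_congr rfl; intros; ring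
        _ = c * (t * x i0) := by
            rw [show (∑ j, B i0 j * x j) = (B.mulVec x) i0 from rfl, ht]; rfl
        _ = t * (c * x i0) := by ring
        _ = t * z i0 := by rw [show c * x i0 = z i0 from div_mul_cancel₀ _ (hx i0).ne']
    exact le_of_mul_le_mul_right key hzi0
  unfold specRad
  apply le_antisymm
  · apply Real.sSup_le
    · rintro s ⟨μ, hμ, rfl⟩
      exact hbound μ hμ
    · exact ht0
  · apply le_csSup
    · refine ⟨t, ?_⟩
      rintro s ⟨μ, hμ, rfl⟩
      exact hbound μ hμ
    · exact ⟨(t:ℂ), hts, by simp [abs_of_nonneg ht0]⟩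

theorem PF.pow_entry_nonneg {n : Type*} [Fintype n] [DecidableEq n] (B : Matrix n n ℝ)
    (hB : ∀ i j, 0 ≤ B i j) : ∀ (k : ℕ) (i j : n), 0 ≤ (B ^ k) i j := by
  intro k
  induction k with
  | zero => intro i j; rw [pow_zero]; by_cases h : i = j <;> simp [Matrix.one_apply, h]
  | succ m ih =>
    intro i j
    rw [pow_succ, Matrix.mul_apply]
    exact Finset.sum_nonneg fun w _ => mul_nonneg (ih i w) (hB w j)

theorem PF.one_add_entry_nonneg {n : Type*} [Fintype n] [DecidableEq n] (B : Matrix n n ℝ)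
    (hB : ∀ i j, 0 ≤ B i j) : ∀ i j, 0 ≤ (1 + B) i j := fun i j => by
  by_cases h : i = j <;> simp [Matrix.add_apply, Matrix.one_apply, h]
  · linarith [hB j j]
  · exact hB i j

theorem PF.one_add_pow_nonneg {n : Type*} [Fintype n] [DecidableEq n] (B : Matrix n n ℝ)
    (hB : ∀ i j, 0 ≤ B i j) :
    ∀ (m : ℕ) (i j : n), 0 ≤ ((1 + B) ^ m) i j :=
  PF.pow_entry_nonneg (1 + B) (PF.one_add_entry_nonneg B hB)

theorem PF.one_add_pow_pos {n : Type*} [Fintype n] [DecidableEq n] (B : Matrix n n ℝ)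
    (hB : ∀ i j, 0 ≤ B i j) :
    ∀ (m : ℕ) (u v : n) (k : ℕ), k ≤ m → 0 < (B ^ k) u v → 0 < ((1 + B) ^ m) u v := by
  intro m
  induction m with
  | zero =>
    intro u v k hk hpos
    interval_cases k
    simpa using hpos
  | succ m ih =>
    intro u v k hk hpos
    have h1B := PF.one_add_entry_nonneg B hB
    rw [pow_succ', Matrix.mul_apply]
    rcases Nat.lt_or_ge k (m+1) with hk' | hk'
    · have hterm : 0 < (1 + B) u u * ((1 + B) ^ m) u v := by
        apply mul_pos
        · have : (1 + B) u u = 1 + B u u := by simp [Matrix.add_apply, Matrix.one_apply]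
          rw [this]; linarith [hB u u]
        · exact ih u v k (Nat.lt_succ_iff.mp hk') hpos
      calc (0:ℝ) < (1 + B) u u * ((1 + B) ^ m) u v := hterm
        _ ≤ ∑ w, (1 + B) u w * ((1 + B) ^ m) w v :=
          Finset.single_le_sum
            (fun w _ => mul_nonneg (h1B u w) (PF.one_add_pow_nonneg B hB m w v))
            (Finset.mem_univ u)
    · have hkeq : k = m + 1 := le_antisymm hk hk'
      subst hkeq
      rw [pow_succ', Matrix.mul_apply] at hpos
      have hex : ∃ w, 0 < B u w * ((B ^ m) w v) := by
        by_contra hcon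
        push_neg at hcon
        have : ∑ w, B u w * (B ^ m) w v ≤ 0 := Finset.sum_nonpos fun w _ => hcon w
        linarith
      obtain ⟨w, hw⟩ := hex
      have hBuw : 0 < B u w := by
        rcases mul_pos_iff.mp hw with ⟨h1, _⟩ | ⟨_, h2⟩
        · exact h1
        · exact absurd h2 (not_lt.mpr (PF.pow_entry_nonneg B hB m w v))
      have hBmwv : 0 < (B ^ m) w v := by
        rcases mul_pos_iff.mp hw with ⟨_, h2⟩ | ⟨h1, _⟩
        · exact h2
        · exact absurd h1 (not_lt.mpr (hB u w))
      have hterm : 0 < (1 + B) u w * ((1 + B) ^ m) w v := by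
        apply mul_pos
        · calc (0:ℝ) < B u w := hBuw
            _ ≤ (1 + B) u w := by
              by_cases h : u = w <;> simp [Matrix.add_apply, Matrix.one_apply, h]
        · exact ih w v m le_rfl hBmwv
      calc (0:ℝ) < (1 + B) u w * ((1 + B) ^ m) w v := hterm
        _ ≤ ∑ w', (1 + B) u w' * ((1 + B) ^ m) w' v :=
          Finset.single_le_sum
            (fun w' _ => mul_nonneg (h1B u w') (PF.one_add_pow_nonneg B hB m w' v))
            (Finset.mem_univ w)

/-- Perron–Frobenius existence: an irreducible nonnegative matrix has a positive
eigenvector with a real eigenvalue. -/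
theorem PF.lemB {n : Type*} [Fintype n] [DecidableEq n] [Nonempty n] (B : Matrix n n ℝ)
    (hB : ∀ i j, 0 ≤ B i j) (hirr : ∀ u v : n, ∃ k : ℕ, 0 < (B ^ k) u v) :
    ∃ (t : ℝ) (x : n → ℝ), (∀ i, 0 < x i) ∧ B.mulVec x = t • x := by
  classical
  set M0 : ℝ := (Fintype.card n : ℝ) * ∑ i, ∑ j, B i j with hM0
  have hM0nn : 0 ≤ M0 := by
    apply mul_nonneg (Nat.cast_nonneg _)
    exact Finset.sum_nonneg fun i _ => Finset.sum_nonneg fun j _ => hB i j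
  have hcard : (0:ℝ) < (Fintype.card n : ℝ) := by
    exact_mod_cast Fintype.card_pos
  have hbd : ∀ (t : ℝ) (x : n → ℝ), 0 ≤ t → (∀ i, 0 ≤ x i) → (∑ i, x i) = 1 →
      (∀ i, t * x i ≤ B.mulVec x i) → t ≤ M0 := by
    intro t x ht hx hsum hineq
    obtain ⟨i, -, hi⟩ : ∃ i ∈ Finset.univ, (Fintype.card n : ℝ)⁻¹ ≤ x i := by
      apply Finset.exists_le_of_sum_le Finset.univ_nonempty
      rw [hsum, Finset.sum_const, Finset.card_univ, nsmul_eq_mul, mul_inv_cancel₀ hcard.ne']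
    have hx1 : ∀ j, x j ≤ 1 := by
      intro j
      rw [← hsum]
      exact Finset.single_le_sum (fun i _ => hx i) (Finset.mem_univ j)
    have h1 : t * (Fintype.card n : ℝ)⁻¹ ≤ t * x i := mul_le_mul_of_nonneg_left hi ht
    have h2 : B.mulVec x i ≤ ∑ j, B i j := by
      apply Finset.sum_le_sum
      intro j _
      calc B i j * x j ≤ B i j * 1 := mul_le_mul_of_nonneg_left (hx1 j) (hB i j)
        _ = B i j := mul_one _
    have h3 : (∑ j, B i j) ≤ ∑ i', ∑ j, B i' j :=
      Finset.single_le_sum (fun i' _ => Finset.sum_nonneg fun j _ => hB i' j) (Finset.mem_univ i)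
    have h4 : t * (Fintype.card n : ℝ)⁻¹ ≤ ∑ i', ∑ j, B i' j :=
      le_trans h1 (le_trans (hineq i) (le_trans h2 h3))
    calc t = (Fintype.card n : ℝ) * (t * (Fintype.card n : ℝ)⁻¹) := by
            field_simp
      _ ≤ (Fintype.card n : ℝ) * ∑ i', ∑ j, B i' j :=
            mul_le_mul_of_nonneg_left h4 hcard.le
  set C : Set (ℝ × (n → ℝ)) := {p | 0 ≤ p.1 ∧ p.1 ≤ M0 ∧ (∀ i, 0 ≤ p.2 i) ∧ (∑ i, p.2 i) = 1 ∧
      ∀ i, p.1 * p.2 i ≤ ∑ j, B i j * p.2 j} with hC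
  have hmulVec : ∀ (M : Matrix n n ℝ) (x : n → ℝ) (i : n), M.mulVec x i = ∑ j, M i j * x j := by
    intro M x i; rfl
  have hCclosed : IsClosed C := by
    have e1 : IsClosed {p : ℝ × (n → ℝ) | 0 ≤ p.1} := isClosed_le continuous_const continuous_fst
    have e2 : IsClosed {p : ℝ × (n → ℝ) | p.1 ≤ M0} := isClosed_le continuous_fst continuous_const
    have e3 : IsClosed {p : ℝ × (n → ℝ) | ∀ i, 0 ≤ p.2 i} := by
      have : {p : ℝ × (n → ℝ) | ∀ i, 0 ≤ p.2 i} = ⋂ i, {p : ℝ × (n → ℝ) | 0 ≤ p.2 i} := by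
        ext p; simp
      rw [this]
      exact isClosed_iInter fun i =>
        isClosed_le continuous_const ((continuous_apply i).comp continuous_snd)
    have e4 : IsClosed {p : ℝ × (n → ℝ) | (∑ i, p.2 i) = 1} :=
      isClosed_eq (by fun_prop) continuous_const
    have e5 : IsClosed {p : ℝ × (n → ℝ) | ∀ i, p.1 * p.2 i ≤ ∑ j, B i j * p.2 j} := by
      have : {p : ℝ × (n → ℝ) | ∀ i, p.1 * p.2 i ≤ ∑ j, B i j * p.2 j} =
          ⋂ i, {p : ℝ × (n → ℝ) | p.1 * p.2 i ≤ ∑ j, B i j * p.2 j} := by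
        ext p; simp
      rw [this]
      refine isClosed_iInter fun i => isClosed_le (by fun_prop) (by fun_prop)
    have : C = {p : ℝ × (n → ℝ) | 0 ≤ p.1} ∩ ({p | p.1 ≤ M0} ∩ ({p | ∀ i, 0 ≤ p.2 i} ∩
        ({p | (∑ i, p.2 i) = 1} ∩ {p | ∀ i, p.1 * p.2 i ≤ ∑ j, B i j * p.2 j}))) := by
      rfl
    rw [this]
    exact e1.inter (e2.inter (e3.inter (e4.inter e5)))
  have hCbdd : Bornology.IsBounded C := by
    rw [Metric.isBounded_iff_subset_closedBall 0]
    refine ⟨max M0 1, ?_⟩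
    rintro ⟨t, x⟩ ⟨h1, h2, h3, h4, -⟩
    rw [Metric.mem_closedBall, dist_zero_right, Prod.norm_def]
    apply max_le
    · simp only [Real.norm_eq_abs]
      rw [abs_of_nonneg h1]
      exact le_max_of_le_left h2
    · apply le_max_of_le_right
      apply pi_norm_le_iff_of_nonneg zero_le_one |>.mpr
      intro i
      rw [Real.norm_eq_abs, abs_of_nonneg (h3 i)]
      rw [← h4]
      exact Finset.single_le_sum (fun j _ => h3 j) (Finset.mem_univ i)
  have hCcompact : IsCompact C := Metric.isCompact_of_isClosed_isBounded hCclosed hCbdd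
  have hCne : C.Nonempty := by
    refine ⟨(0, fun _ => (Fintype.card n : ℝ)⁻¹), le_refl 0, hM0nn, fun i => by positivity,
      ?_, ?_⟩
    · rw [Finset.sum_const, Finset.card_univ, nsmul_eq_mul, mul_inv_cancel₀ hcard.ne']
    · intro i
      rw [zero_mul]
      exact Finset.sum_nonneg fun j _ => mul_nonneg (hB i j) (by positivity)
  set Λ : Set ℝ := Prod.fst '' C with hΛ
  have hΛcompact : IsCompact Λ := hCcompact.image continuous_fst
  have hΛne : Λ.Nonempty := hCne.image _
  set t0 : ℝ := sSup Λ with ht0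
  have ht0mem : t0 ∈ Λ := hΛcompact.sSup_mem hΛne
  obtain ⟨⟨t0', x0⟩, hpC, hfst⟩ := ht0mem
  simp only at hfst
  subst hfst
  obtain ⟨ht0nn, ht0le, hx0nn, hx0sum, hx0ineq⟩ := hpC
  set kk : n → n → ℕ := fun u v => Classical.choose (hirr u v) with hkk
  have hkkpos : ∀ u v, 0 < (B ^ (kk u v)) u v := fun u v => Classical.choose_spec (hirr u v)
  set m : ℕ := Finset.univ.sup (fun u => Finset.univ.sup (kk u)) with hm
  have hkm : ∀ u v, kk u v ≤ m := by
    intro u v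
    calc kk u v ≤ Finset.univ.sup (kk u) := Finset.le_sup (Finset.mem_univ v)
      _ ≤ m := Finset.le_sup (f := fun u => Finset.univ.sup (kk u)) (Finset.mem_univ u)
  have hpos : ∀ u v, 0 < ((1 + B) ^ m) u v :=
    fun u v => PF.one_add_pow_pos B hB m u v (kk u v) (hkm u v) (hkkpos u v)
  set y : n → ℝ := ((1 + B) ^ m).mulVec x0 with hy
  have hx0ex : ∃ j, 0 < x0 j := by
    by_contra hcon
    push_neg at hcon
    have : ∀ j, x0 j = 0 := fun j => le_antisymm (hcon j) (hx0nn j)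
    rw [Finset.sum_congr rfl (fun j _ => this j)] at hx0sum
    simp at hx0sum
  obtain ⟨j0, hj0⟩ := hx0ex
  have hypos : ∀ i, 0 < y i := by
    intro i
    rw [hy, hmulVec]
    calc (0:ℝ) < ((1 + B) ^ m) i j0 * x0 j0 := mul_pos (hpos i j0) hj0
      _ ≤ ∑ j, ((1 + B) ^ m) i j * x0 j :=
        Finset.single_le_sum
          (fun j _ => mul_nonneg (PF.one_add_pow_nonneg B hB m i j) (hx0nn j))
          (Finset.mem_univ j0)
  set d : n → ℝ := B.mulVec x0 - t0 • x0 with hd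
  have hdnn : ∀ i, 0 ≤ d i := by
    intro i
    rw [hd]
    simp only [Pi.sub_apply, Pi.smul_apply, smul_eq_mul, sub_nonneg, hmulVec]
    exact hx0ineq i
  have hdzero : d = 0 := by
    by_contra hdne
    have hdex : ∃ j, 0 < d j := by
      by_contra hcon
      push_neg at hcon
      exact hdne (funext fun j => le_antisymm (hcon j) (hdnn j))
    obtain ⟨j1, hj1⟩ := hdex
    set Cd : n → ℝ := ((1 + B) ^ m).mulVec d with hCd
    have hCdpos : ∀ i, 0 < Cd i := by
      intro i
      rw [hCd, hmulVec]
      calc (0:ℝ) < ((1 + B) ^ m) i j1 * d j1 := mul_pos (hpos i j1) hj1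
        _ ≤ ∑ j, ((1 + B) ^ m) i j * d j :=
          Finset.single_le_sum
            (fun j _ => mul_nonneg (PF.one_add_pow_nonneg B hB m i j) (hdnn j))
            (Finset.mem_univ j1)
    have hcomm : B * (1 + B) ^ m = (1 + B) ^ m * B :=
      (((Commute.one_right B).add_right (Commute.refl B)).pow_right m).eq
    have hBy : B.mulVec y = t0 • y + Cd := by
      have hBx0 : B.mulVec x0 = t0 • x0 + d := by rw [hd]; abel
      rw [hy, Matrix.mulVec_mulVec, hcomm, ← Matrix.mulVec_mulVec, hBx0,
        Matrix.mulVec_add, Matrix.mulVec_smul]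
    set ε : ℝ := Finset.univ.inf' Finset.univ_nonempty (fun i => Cd i / y i) with hε
    have hεpos : 0 < ε := by
      rw [hε, Finset.lt_inf'_iff]
      exact fun i _ => div_pos (hCdpos i) (hypos i)
    have hineqy : ∀ i, (t0 + ε) * y i ≤ B.mulVec y i := by
      intro i
      have h1 : ε ≤ Cd i / y i := Finset.inf'_le _ (Finset.mem_univ i)
      have h2 : ε * y i ≤ Cd i := (le_div_iff₀ (hypos i)).mp h1
      have h3 : B.mulVec y i = t0 * y i + Cd i := by
        rw [hBy]; simp [Pi.add_apply]
      rw [h3]; nlinarith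
    set s : ℝ := ∑ i, y i with hs
    have hspos : 0 < s := Finset.sum_pos (fun i _ => hypos i) Finset.univ_nonempty
    have hfeas : (t0 + ε, s⁻¹ • y) ∈ C := by
      have hsynn : ∀ i, 0 ≤ (s⁻¹ • y) i :=
        fun i => mul_nonneg (inv_nonneg.mpr hspos.le) (hypos i).le
      have hsysum : ∑ i, (s⁻¹ • y) i = 1 := by
        simp only [Pi.smul_apply, smul_eq_mul]
        rw [← Finset.mul_sum, ← hs, inv_mul_cancel₀ hspos.ne']
      refine ⟨by linarith, ?_, hsynn, hsysum, ?_⟩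
      · apply hbd (t0 + ε) (s⁻¹ • y) (by linarith) hsynn hsysum
        · intro i
          rw [hmulVec]
          have : ∑ j, B i j * (s⁻¹ • y) j = s⁻¹ * ∑ j, B i j * y j := by
            rw [Finset.mul_sum]
            apply Finset.sum_congr rfl
            intro j _
            simp [Pi.smul_apply, smul_eq_mul]; ring
          rw [this]
          have h4 := hineqy i
          rw [hmulVec] at h4
          have : (t0 + ε) * (s⁻¹ • y) i = s⁻¹ * ((t0 + ε) * y i) := by
            simp [Pi.smul_apply, smul_eq_mul]; ring
          rw [this]
          apply mul_le_mul_of_nonneg_left h4 (inv_nonneg.mpr hspos.le)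
      · intro i
        have h4 := hineqy i
        rw [hmulVec] at h4
        have e1 : ∑ j, B i j * (s⁻¹ • y) j = s⁻¹ * ∑ j, B i j * y j := by
          rw [Finset.mul_sum]
          apply Finset.sum_congr rfl
          intro j _
          simp [Pi.smul_apply, smul_eq_mul]; ring
        have e2 : (t0 + ε) * (s⁻¹ • y) i = s⁻¹ * ((t0 + ε) * y i) := by
          simp [Pi.smul_apply, smul_eq_mul]; ring
        rw [e1, e2]
        apply mul_le_mul_of_nonneg_left h4 (inv_nonneg.mpr hspos.le)
    have hmem : t0 + ε ∈ Λ := ⟨_, hfeas, rfl⟩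
    have : t0 + ε ≤ t0 := le_csSup hΛcompact.bddAbove hmem
    linarith
  have hBx0 : B.mulVec x0 = t0 • x0 := by
    have := hdzero
    rw [hd, sub_eq_zero] at this
    exact this
  have hymul : ∀ (j : ℕ), ((1 + B) ^ j).mulVec x0 = ((1 + t0) ^ j) • x0 := by
    intro j
    induction j with
    | zero => simp [Matrix.one_mulVec]
    | succ j ih =>
      have hstep : ((1 + B) ^ (j+1)).mulVec x0 = (1 + B).mulVec (((1 + B) ^ j).mulVec x0) := by
        rw [Matrix.mulVec_mulVec, ← pow_succ']
      rw [hstep, ih, Matrix.mulVec_smul, Matrix.add_mulVec, Matrix.one_mulVec, hBx0, pow_succ']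
      module
  have hx0pos : ∀ i, 0 < x0 i := by
    intro i
    have h1 : y = ((1 + t0) ^ m) • x0 := by rw [hy, hymul m]
    have h2 : 0 < (1 + t0) ^ m := by positivity
    have h3 := hypos i
    rw [h1] at h3
    simp only [Pi.smul_apply, smul_eq_mul] at h3
    nlinarith
  exact ⟨t0, x0, hx0pos, hBx0⟩

theorem PF.reach_pow_pos {n : Type*} [Fintype n] [DecidableEq n] (B : Matrix n n ℝ)
    (hB : ∀ i j, 0 ≤ B i j) (r : n → n → Prop)
    (hr : ∀ a b, r a b → 0 < B a b) {u v : n} (h : Relation.ReflTransGen r u v) :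
    ∃ k : ℕ, 0 < (B ^ k) u v := by
  induction h with
  | refl => exact ⟨0, by simp [Matrix.one_apply_eq]⟩
  | tail h1 h2 ih =>
    obtain ⟨k, hk⟩ := ih
    refine ⟨k + 1, ?_⟩
    rw [pow_succ, Matrix.mul_apply]
    exact lt_of_lt_of_le (mul_pos hk (hr _ _ h2))
      (Finset.single_le_sum
        (fun w _ => mul_nonneg (PF.pow_entry_nonneg B hB k u w) (hB w _)) (Finset.mem_univ _))

theorem PF.lift_rtg {V : Type*} (r : V → V → Prop) (adj : V → V → Prop) (T : Finset V)
    (hr : ∀ a b, r a b → adj a b) (hcl : ∀ a b, a ∈ T → r a b → b ∈ T)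
    {u v : V} (h : Relation.ReflTransGen r u v) (hu : u ∈ T) :
    ∃ hv : v ∈ T, Relation.ReflTransGen (fun a b : T => adj a.1 b.1) ⟨u, hu⟩ ⟨v, hv⟩ := by
  induction h with
  | refl => exact ⟨hu, Relation.ReflTransGen.refl⟩
  | tail h1 h2 ih =>
    obtain ⟨hb, p⟩ := ih
    exact ⟨hcl _ _ hb h2, p.tail (hr _ _ h2)⟩

theorem stmt2 {V : Type*} [Fintype V] [DecidableEq V] (adj : V → V → Prop)
    (hirr : Irreflexive adj) (lam : ℝ) :
    isComplEig (adjMat adj) lam ↔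
      ∃ S : Finset V, S.Nonempty ∧
        (∀ u v : S, Relation.ReflTransGen (fun a b : S => adj a.1 b.1) u v) ∧
        lam = specRad (psub (adjMat adj) S) := by
  classical
  set A := adjMat adj with hA
  have hAnn : ∀ i j : V, 0 ≤ A i j := by
    intro i j
    by_cases h : adj i j <;> simp [hA, adjMat, h]
  have hAmem : ∀ i j : V, adj i j → A i j = 1 := by
    intro i j h; simp [hA, adjMat, h]
  have hAnot : ∀ i j : V, ¬ adj i j → A i j = 0 := by
    intro i j h; simp [hA, adjMat, h]
  have hmulVec : ∀ (x : V → ℝ) (i : V), A.mulVec x i = ∑ j, A i j * x j := fun x i => rfl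
  constructor
  · rintro ⟨x, hx0, hxnn, hslack, hcompl⟩
    have hxnn' : ∀ i, 0 ≤ x i := fun i => (Pi.le_def.mp hxnn) i
    have hslack' : ∀ i, 0 ≤ (A.mulVec x - lam • x) i := fun i => (Pi.le_def.mp hslack) i
    set supp : Finset V := Finset.univ.filter (fun i => 0 < x i) with hsuppdef
    have hmemsupp : ∀ i, i ∈ supp ↔ 0 < x i := by
      intro i; simp [hsuppdef]
    have hsupp_ne : supp.Nonempty := by
      obtain ⟨i, hi⟩ := Function.ne_iff.mp hx0
      exact ⟨i, (hmemsupp i).mpr (lt_of_le_of_ne (hxnn' i) (Ne.symm (by simpa using hi)))⟩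
    have hxoff : ∀ j, j ∉ supp → x j = 0 := by
      intro j hj
      rw [hmemsupp j] at hj
      push_neg at hj
      exact le_antisymm hj (hxnn' j)
    have hterm : ∀ i, x i * (A.mulVec x - lam • x) i = 0 := by
      have h0 := (Finset.sum_eq_zero_iff_of_nonneg
        (fun i _ => mul_nonneg (hxnn' i) (hslack' i))).mp hcompl
      intro i; exact h0 i (Finset.mem_univ i)
    have heig : ∀ i, i ∈ supp → A.mulVec x i = lam * x i := by
      intro i hi
      have h2 : (A.mulVec x - lam • x) i = 0 :=
        (mul_eq_zero.mp (hterm i)).resolve_left (ne_of_gt ((hmemsupp i).mp hi))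
      simp only [Pi.sub_apply, Pi.smul_apply, smul_eq_mul, sub_eq_zero] at h2
      exact h2
    set rS : V → V → Prop := fun a b => a ∈ supp ∧ b ∈ supp ∧ adj a b with hrS
    set Reach : V → Finset V := fun u => supp.filter (fun v => Relation.ReflTransGen rS u v)
      with hReach
    obtain ⟨u0, hu0s, hmin⟩ := Finset.exists_min_image supp (fun u => (Reach u).card) hsupp_ne
    set T : Finset V := Reach u0 with hT
    have hmemT : ∀ v, v ∈ T ↔ (v ∈ supp ∧ Relation.ReflTransGen rS u0 v) := by
      intro v; rw [hT, hReach]; simp [Finset.mem_filter]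
    have hTsub : T ⊆ supp := fun v hv => ((hmemT v).mp hv).1
    have hu0T : u0 ∈ T := (hmemT u0).mpr ⟨hu0s, Relation.ReflTransGen.refl⟩
    have hclosed : ∀ a b, a ∈ T → adj a b → b ∈ supp → b ∈ T := by
      intro a b ha hab hb
      have ha' := (hmemT a).mp ha
      exact (hmemT b).mpr ⟨hb, ha'.2.tail ⟨ha'.1, hb, hab⟩⟩
    have hReachT : ∀ u, u ∈ T → Reach u = T := by
      intro u hu
      have hsubset : Reach u ⊆ T := by
        intro w hw
        have hw' := Finset.mem_filter.mp (by rw [hReach] at hw; exact hw)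
        exact (hmemT w).mpr ⟨hw'.1, ((hmemT u).mp hu).2.trans hw'.2⟩
      exact Finset.eq_of_subset_of_card_le hsubset (hmin u (hTsub hu))
    have hconn : ∀ u v : T, Relation.ReflTransGen (fun a b : T => adj a.1 b.1) u v := by
      rintro ⟨u, hu⟩ ⟨v, hv⟩
      have hvRu : v ∈ Reach u := by rw [hReachT u hu]; exact hv
      have hrtg : Relation.ReflTransGen rS u v := by
        have := Finset.mem_filter.mp (by rw [hReach] at hvRu; exact hvRu)
        exact this.2
      obtain ⟨hv', p⟩ := PF.lift_rtg rS adj T (fun a b h => h.2.2)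
        (fun a b ha hab => hclosed a b ha hab.2.2 hab.2.1) hrtg hu
      exact p
    haveI : Nonempty {v // v ∈ T} := ⟨⟨u0, hu0T⟩⟩
    set B := psub A T with hB
    have hBnn : ∀ i j, 0 ≤ B i j := fun i j => hAnn i.1 j.1
    set xT : {v // v ∈ T} → ℝ := fun i => x i.1 with hxT
    have hxTpos : ∀ i, 0 < xT i := fun i => (hmemsupp i.1).mp (hTsub i.2)
    have heigT : B.mulVec xT = lam • xT := by
      funext i
      have h1 : (∑ j, A i.1 j * x j) = ∑ j ∈ T, A i.1 j * x j := by
        symm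
        apply Finset.sum_subset (Finset.subset_univ T)
        intro j _ hj
        by_cases hjs : j ∈ supp
        · have hnadj : ¬ adj i.1 j := fun hadj => hj (hclosed i.1 j i.2 hadj hjs)
          rw [hAnot _ _ hnadj, zero_mul]
        · rw [hxoff j hjs, mul_zero]
      have h2 : (B.mulVec xT) i = ∑ j ∈ T, A i.1 j * x j := by
        rw [show (B.mulVec xT) i = ∑ j : {v // v ∈ T}, A i.1 j.1 * x j.1 from rfl]
        exact Finset.sum_coe_sort T (fun j => A i.1 j * x j)
      have h3 : (∑ j, A i.1 j * x j) = lam * x i.1 := heig i.1 (hTsub i.2)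
      rw [h2, ← h1, h3]
      rfl
    exact ⟨T, ⟨u0, hu0T⟩, hconn, (PF.lemA B hBnn xT hxTpos lam heigT).symm⟩
  · rintro ⟨S, hSne, hconn, hlam⟩
    haveI : Nonempty {v // v ∈ S} := ⟨⟨hSne.choose, hSne.choose_spec⟩⟩
    set B := psub A S with hB
    have hBnn : ∀ i j, 0 ≤ B i j := fun i j => hAnn i.1 j.1
    have hirrB : ∀ u v : {v // v ∈ S}, ∃ k : ℕ, 0 < (B ^ k) u v := by
      intro u v
      apply PF.reach_pow_pos B hBnn (fun a b : {v // v ∈ S} => adj a.1 b.1)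
      · intro a b hab
        have h1 : B a b = 1 := hAmem a.1 b.1 hab
        rw [h1]; norm_num
      · exact hconn u v
    obtain ⟨t, xp, hxpos, hBx⟩ := PF.lemB B hBnn hirrB
    have hts : specRad B = t := PF.lemA B hBnn xp hxpos t hBx
    have hlamt : lam = t := by rw [hlam, hts]
    set xe : V → ℝ := fun i => if h : i ∈ S then xp ⟨i, h⟩ else 0 with hxe
    have hxeS : ∀ i (h : i ∈ S), xe i = xp ⟨i, h⟩ := by
      intro i h; rw [hxe]; exact dif_pos h
    have hxeoff : ∀ i, i ∉ S → xe i = 0 := by intro i h; rw [hxe]; exact dif_neg h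
    have hxe_nn : ∀ i, 0 ≤ xe i := by
      intro i; by_cases h : i ∈ S
      · rw [hxeS i h]; exact (hxpos _).le
      · rw [hxeoff i h]
    have hsum : ∀ i, A.mulVec xe i = ∑ j ∈ S, A i j * xe j := by
      intro i
      rw [hmulVec]
      symm
      apply Finset.sum_subset (Finset.subset_univ S)
      intro j _ hj
      rw [hxeoff j hj, mul_zero]
    have hsum2 : ∀ i, ∀ h : i ∈ S, A.mulVec xe i = t * xe i := by
      intro i hi
      rw [hsum i]
      have e1 : ∑ j ∈ S, A i j * xe j = ∑ j : {v // v ∈ S}, A i j.1 * xe j.1 :=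
        (Finset.sum_coe_sort S (fun j => A i j * xe j)).symm
      have e2 : ∑ j : {v // v ∈ S}, A i j.1 * xe j.1 = (B.mulVec xp) ⟨i, hi⟩ := by
        rw [show (B.mulVec xp) ⟨i,hi⟩ = ∑ j : {v // v ∈ S}, B ⟨i,hi⟩ j * xp j from rfl]
        apply Finset.sum_congr rfl
        intro j _
        rw [hxeS j.1 j.2]
        rfl
      rw [e1, e2, hBx]
      rw [hxeS i hi]
      rfl
    refine ⟨xe, ?_, ?_, ?_, ?_⟩
    · intro h0
      obtain ⟨s0, hs0⟩ := hSne
      have hc := congrFun h0 s0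
      rw [hxeS s0 hs0] at hc
      exact (hxpos ⟨s0, hs0⟩).ne' (by simpa using hc)
    · rw [Pi.le_def]
      intro i
      simpa using hxe_nn i
    · rw [Pi.le_def]
      intro i
      simp only [Pi.sub_apply, Pi.smul_apply, smul_eq_mul, Pi.zero_apply, sub_nonneg]
      by_cases h : i ∈ S
      · rw [hsum2 i h, hlamt]
      · rw [hxeoff i h, mul_zero]
        rw [hsum i]
        exact Finset.sum_nonneg fun j hj => mul_nonneg (hAnn i j) (hxe_nn j)
    · apply Finset.sum_eq_zero
      intro i _
      by_cases h : i ∈ S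
      · have hz : (A.mulVec xe - lam • xe) i = 0 := by
          simp only [Pi.sub_apply, Pi.smul_apply, smul_eq_mul]
          rw [hsum2 i h, hlamt]; ring
        rw [hz, mul_zero]
      · rw [hxeoff i h, zero_mul]
end

section
/- Let D be a strongly connected finite simple digraph on a finite vertex type V with at least 2 elements, and let n = |V|. The following are equivalent: (i) Π(D) = {0, 1}; (ii) Π(D) has exactly two elements; (iii) D is a directed n-cycle, i.e., there is a bijection c : ZMod n ≃ V such that for all u, w ∈ V, adj u w holds if and only if c.symm w = c.symm u + 1. -/
open Matrix Polynomial

set_option linter.unusedSectionVars false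
set_option maxHeartbeats 1600000

section Aux
variable {V : Type*} [Fintype V] [DecidableEq V] {adj : V → V → Prop}

lemma adjMat_nonneg (i j : V) : 0 ≤ adjMat adj i j := by
  unfold adjMat; simp only [Matrix.of_apply]; split <;> norm_num

lemma adjMat_eq_one {i j : V} (h : adj i j) : adjMat adj i j = 1 := by
  unfold adjMat; simp only [Matrix.of_apply]; split <;> tauto

lemma adjMat_eq_zero {i j : V} (h : ¬ adj i j) : adjMat adj i j = 0 := by
  unfold adjMat; simp only [Matrix.of_apply]; split <;> tauto

lemma adjMat_pos_iff {i j : V} : 0 < adjMat adj i j ↔ adj i j := by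
  constructor
  · intro h
    by_contra hc
    rw [adjMat_eq_zero hc] at h; exact lt_irrefl _ h
  · intro h; rw [adjMat_eq_one h]; norm_num

lemma mulVec_apply' (A : Matrix V V ℝ) (x : V → ℝ) (i : V) :
    A.mulVec x i = ∑ j, A i j * x j := rfl

lemma mulVec_nonneg {A : Matrix V V ℝ} (hA : ∀ i j, 0 ≤ A i j) {x : V → ℝ} (hx : 0 ≤ x) :
    0 ≤ A.mulVec x := by
  intro i
  exact Finset.sum_nonneg fun j _ => mul_nonneg (hA i j) (hx j)

/-- helper: exact eigen-equation on the support gives a complementarity eigenvalue. -/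
lemma isComplEig_of {lam : ℝ} (x : V → ℝ) (hx : x ≠ 0) (hx0 : 0 ≤ x)
    (heig : ∀ i, x i ≠ 0 → (adjMat adj).mulVec x i = lam * x i) :
    isComplEig (adjMat adj) lam := by
  refine ⟨x, hx, hx0, ?_, ?_⟩
  · intro i
    simp only [Pi.sub_apply, Pi.smul_apply, smul_eq_mul, Pi.zero_apply]
    by_cases h : x i = 0
    · rw [h, mul_zero, sub_zero]
      exact mulVec_nonneg (fun i j => adjMat_nonneg i j) hx0 i
    · rw [heig i h]; simp
  · apply Finset.sum_eq_zero
    intro i _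
    by_cases h : x i = 0
    · rw [h, zero_mul]
    · simp only [Pi.sub_apply, Pi.smul_apply, smul_eq_mul]
      rw [heig i h]; ring

lemma zero_mem (hirr : Irreflexive adj) (v₀ : V) : isComplEig (adjMat adj) 0 := by
  classical
  apply isComplEig_of (fun i => if i = v₀ then 1 else 0)
  · intro h
    have := congrFun h v₀
    simp at this
  · intro i; dsimp; split <;> norm_num
  · intro i hi
    have hiv : i = v₀ := by by_contra hc; simp [hc] at hi
    subst hiv
    rw [mulVec_apply']
    simp only [mul_ite, mul_one, mul_zero]
    rw [Finset.sum_ite_eq' Finset.univ i (fun j => adjMat adj i j)]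
    simp [adjMat_eq_zero (hirr i)]


lemma iterate_mod {σ : V → V} {p : V} {k : ℕ} (hk : σ^[k] p = p) (t : ℕ) :
    σ^[t] p = σ^[t % k] p := by
  conv_lhs => rw [← Nat.div_add_mod t k]
  rw [Nat.add_comm, Function.iterate_add_apply]
  congr 1
  induction t / k with
  | zero => simp
  | succ q ih => rw [Nat.mul_succ, Function.iterate_add_apply, hk, ih]

lemma cyclic_param (σ : V → V) (p : V) (m : ℕ) (hm : 0 < m) (hp : σ^[m] p = p) :
    ∃ k : ℕ, 0 < k ∧ ∃ f : ZMod k → V,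
      Function.Injective f ∧ (∀ u, f (u + 1) = σ (f u)) ∧
      (∀ t : ℕ, σ^[t] p = f (t : ZMod k)) ∧ f 0 = p := by
  have hex : ∃ k, 0 < k ∧ σ^[k] p = p := ⟨m, hm, hp⟩
  classical
  set k := Nat.find hex with hkdef
  obtain ⟨hkpos, hkper⟩ := Nat.find_spec hex
  haveI : NeZero k := ⟨hkpos.ne'⟩
  have hnat : ∀ t : ℕ, σ^[t] p = (fun u : ZMod k => σ^[u.val] p) (t : ZMod k) := by
    intro t
    simp only [ZMod.val_natCast, ← iterate_mod hkper]
    exact iterate_mod hkper t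
  refine ⟨k, hkpos, fun u => σ^[u.val] p, ?_, ?_, hnat, ?_⟩
  · -- injective
    intro u v huv
    simp only at huv
    wlog hle : u.val ≤ v.val generalizing u v
    · exact (this huv.symm (le_of_not_ge hle)).symm
    have hv := ZMod.val_lt v
    have hu := ZMod.val_lt u
    have key : σ^[(k - v.val) + u.val] p = p := by
      rw [Function.iterate_add_apply, huv, ← Function.iterate_add_apply,
        Nat.sub_add_cancel hv.le, hkper]
    have h1 : 0 < (k - v.val) + u.val := by omega
    have h2 : k ≤ (k - v.val) + u.val := by
      by_contra hc
      exact Nat.find_min hex (by omega : (k - v.val) + u.val < k) ⟨h1, key⟩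
    have : u.val = v.val := by omega
    exact ZMod.val_injective _ this
  · -- successor
    intro u
    have hu : ((u.val : ℕ) : ZMod k) = u := by rw [ZMod.natCast_val, ZMod.cast_id]
    calc (fun u : ZMod k => σ^[u.val] p) (u + 1)
        = (fun u : ZMod k => σ^[u.val] p) (((u.val + 1 : ℕ) : ZMod k)) := by
          rw [Nat.cast_add, Nat.cast_one, hu]
      _ = σ^[u.val + 1] p := (hnat _).symm
      _ = σ ((fun u : ZMod k => σ^[u.val] p) u) := by
          rw [Function.iterate_succ_apply']
  · simp


lemma exists_unique_out_set {adj : V → V → Prop} [Nonempty V]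
    (hirr : Irreflexive adj) (hout : ∀ u : V, ∃ v, adj u v) :
    ∃ S : Finset V, S.Nonempty ∧
      ∀ i ∈ S, ∃ j ∈ S, adj i j ∧ ∀ j' ∈ S, adj i j' → j' = j := by
  classical
  set P : Finset V → Prop := fun S => S.Nonempty ∧ ∀ i ∈ S, ∃ j ∈ S, adj i j with hP
  have hex : ∃ n, ∃ S, P S ∧ S.card = n := by
    refine ⟨Finset.univ.card, Finset.univ, ⟨Finset.univ_nonempty, ?_⟩, rfl⟩
    intro i _
    obtain ⟨j, hj⟩ := hout i
    exact ⟨j, Finset.mem_univ j, hj⟩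
  obtain ⟨S, hPS, hcard⟩ := Nat.find_spec hex
  have hmin : ∀ S', P S' → S.card ≤ S'.card := by
    intro S' h
    rw [hcard]
    exact Nat.find_le ⟨S', h, rfl⟩
  -- the successor choice function
  set σ : V → V := fun i => if h : ∃ j ∈ S, adj i j then h.choose else i with hσdef
  have hσ : ∀ i ∈ S, σ i ∈ S ∧ adj i (σ i) := by
    intro i hi
    have h := hPS.2 i hi
    simp only [hσdef, dif_pos h]
    exact ⟨h.choose_spec.1, h.choose_spec.2⟩
  obtain ⟨s, hs⟩ := hPS.1
  have hiter : ∀ t : ℕ, σ^[t] s ∈ S := by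
    intro t
    induction t with
    | zero => exact hs
    | succ t ih => rw [Function.iterate_succ_apply']; exact (hσ _ ih).1
  -- pigeonhole: find a periodic point
  obtain ⟨a, ha, b, hb, hab, heq⟩ :=
    Finset.exists_ne_map_eq_of_card_lt_of_maps_to
      (s := Finset.range (S.card + 1)) (t := S)
      (by simp) (fun t _ => hiter t)
  wlog hlt : a < b generalizing a b
  · exact this b hb a ha hab.symm heq.symm (by omega : b < a)
  set p := σ^[a] s with hpdef
  have hper : σ^[b - a] p = p := by
    rw [hpdef, ← Function.iterate_add_apply, Nat.sub_add_cancel hlt.le, ← heq]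
  obtain ⟨k, hkpos, f, hfinj, hfsucc, hfnat, hf0⟩ :=
    cyclic_param σ p (b - a) (by omega) hper
  haveI : NeZero k := ⟨hkpos.ne'⟩
  have hfval : ∀ u : ZMod k, f u = σ^[u.val] p := by
    intro u
    have hu : ((u.val : ℕ) : ZMod k) = u := by rw [ZMod.natCast_val, ZMod.cast_id]
    have h := hfnat u.val
    rw [hu] at h
    exact h.symm
  have hfS : ∀ u : ZMod k, f u ∈ S := by
    intro u
    rw [hfval, hpdef, ← Function.iterate_add_apply]
    exact hiter _
  set S' : Finset V := Finset.image f Finset.univ with hS'def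
  have hS'sub : S' ⊆ S := by
    intro x hx
    simp only [hS'def, Finset.mem_image] at hx
    obtain ⟨u, _, rfl⟩ := hx
    exact hfS u
  have hPS' : P S' := by
    constructor
    · exact ⟨f 0, Finset.mem_image_of_mem f (Finset.mem_univ 0)⟩
    · intro i hi
      simp only [hS'def, Finset.mem_image] at hi
      obtain ⟨u, _, rfl⟩ := hi
      refine ⟨f (u + 1), Finset.mem_image_of_mem f (Finset.mem_univ _), ?_⟩
      rw [hfsucc]
      exact (hσ _ (hfS u)).2
  have hSeq : S' = S := Finset.eq_of_subset_of_card_le hS'sub (hmin S' hPS')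
  have hcardk : S.card = k := by
    rw [← hSeq, hS'def, Finset.card_image_of_injective _ hfinj, Finset.card_univ, ZMod.card]
  -- main claim
  refine ⟨S, hPS.1, ?_⟩
  intro i hi
  have hi' : i ∈ S' := by rw [hSeq]; exact hi
  simp only [hS'def, Finset.mem_image] at hi'
  obtain ⟨u, _, rfl⟩ := hi'
  refine ⟨f (u + 1), hfS _, by rw [hfsucc]; exact (hσ _ (hfS u)).2, ?_⟩
  intro j' hj'S hadj
  by_contra hne
  have hj'' : j' ∈ S' := by rw [hSeq]; exact hj'S
  simp only [hS'def, Finset.mem_image] at hj''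
  obtain ⟨c, _, rfl⟩ := hj''
  -- c ≠ u + 1, c ≠ u
  have hcu1 : c ≠ u + 1 := fun h => hne (by rw [h])
  have hcu : c ≠ u := by
    rintro rfl
    exact hirr _ hadj
  set d := (c - u).val with hddef
  have hd0 : d ≠ 0 := by
    simp only [hddef, Ne, ZMod.val_eq_zero, sub_eq_zero]
    exact hcu
  have hdcast : ((d : ℕ) : ZMod k) = c - u := by rw [hddef, ZMod.natCast_val, ZMod.cast_id]
  have hd1 : d ≠ 1 := by
    intro h
    apply hcu1
    have : c - u = 1 := by rw [← hdcast, h, Nat.cast_one]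
    rw [← sub_eq_iff_eq_add'.mp this]
  have hdk : d < k := ZMod.val_lt _
  -- the shortcut set
  set T : Finset (ZMod k) :=
    insert u ((Finset.range (k - d)).image (fun t : ℕ => c + ((t : ℕ) : ZMod k))) with hTdef
  have hcT : c ∈ T := by
    simp only [hTdef, Finset.mem_insert, Finset.mem_image, Finset.mem_range]
    right
    exact ⟨0, by omega, by simp⟩
  have hwrap : c + ((k - d : ℕ) : ZMod k) = u := by
    have : ((k - d : ℕ) : ZMod k) = u - c := by
      rw [Nat.cast_sub hdk.le, ZMod.natCast_self, hdcast]
      ring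
    rw [this]; ring
  set S'' : Finset V := T.image f with hS''def
  have hPS'' : P S'' := by
    constructor
    · exact ⟨f u, Finset.mem_image_of_mem f (by simp [hTdef])⟩
    · intro x hx
      simp only [hS''def, Finset.mem_image] at hx
      obtain ⟨e, he, rfl⟩ := hx
      simp only [hTdef, Finset.mem_insert, Finset.mem_image, Finset.mem_range] at he
      rcases he with rfl | ⟨t, ht, rfl⟩
      · -- e = u : use the chord to c
        exact ⟨f c, Finset.mem_image_of_mem f hcT, hadj⟩
      · -- e = c + t
        refine ⟨f (c + ((t : ℕ) : ZMod k) + 1), ?_, ?_⟩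
        · apply Finset.mem_image_of_mem f
          simp only [hTdef, Finset.mem_insert, Finset.mem_image, Finset.mem_range]
          by_cases htt : t + 1 < k - d
          · right
            exact ⟨t + 1, htt, by push_cast; ring⟩
          · left
            have ht1 : t + 1 = k - d := by omega
            rw [← hwrap, ← ht1]
            push_cast; ring
        · rw [hfsucc]
          exact (hσ _ (hfS _)).2
  have hd2 : 2 ≤ d := by omega
  have hcard'' : S''.card < S.card := by
    have h1 : S''.card ≤ T.card := Finset.card_image_le
    have h2 : T.card ≤ ((Finset.range (k - d)).image (fun t : ℕ => c + ((t : ℕ) : ZMod k))).card + 1 :=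
      Finset.card_insert_le _ _
    have h3 : ((Finset.range (k - d)).image (fun t : ℕ => c + ((t : ℕ) : ZMod k))).card ≤ k - d := by
      calc _ ≤ (Finset.range (k - d)).card := Finset.card_image_le
        _ = k - d := Finset.card_range _
    rw [hcardk]
    omega
  exact absurd (hmin S'' hPS'') (by omega)


-- out/in neighbors from strong connectivity
lemma exists_out (hcard : 2 ≤ Fintype.card V)
    (hsconn : ∀ u v : V, Relation.ReflTransGen adj u v) (u : V) : ∃ v, adj u v := by
  obtain ⟨v, hv⟩ := Fintype.exists_ne_of_one_lt_card (by omega) u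
  rcases (hsconn u v).cases_head with h | ⟨w, hw, _⟩
  · exact absurd h.symm hv
  · exact ⟨w, hw⟩

lemma exists_in (hcard : 2 ≤ Fintype.card V)
    (hsconn : ∀ u v : V, Relation.ReflTransGen adj u v) (v : V) : ∃ u, adj u v := by
  obtain ⟨u, hu⟩ := Fintype.exists_ne_of_one_lt_card (by omega) v
  rcases (hsconn u v).cases_tail with h | ⟨w, _, hw⟩
  · exact absurd h.symm hu
  · exact ⟨w, hw⟩

lemma one_mem [Nonempty V] (hirr : Irreflexive adj) (hout : ∀ u : V, ∃ v, adj u v) :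
    isComplEig (adjMat adj) 1 := by
  classical
  obtain ⟨S, hSne, hS⟩ := exists_unique_out_set hirr hout
  apply isComplEig_of (fun i => if i ∈ S then 1 else 0)
  · intro h
    obtain ⟨i0, hi0⟩ := hSne
    have := congrFun h i0
    simp [hi0] at this
  · intro i; dsimp; split <;> norm_num
  · intro i hi
    have hiS : i ∈ S := by by_contra hc; simp [hc] at hi
    obtain ⟨j, hjS, hadj, huniq⟩ := hS i hiS
    rw [mulVec_apply']
    simp only [hiS, if_true, mul_one]
    have : ∀ j' : V, adjMat adj i j' * (if j' ∈ S then (1:ℝ) else 0)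
        = if j' = j then 1 else 0 := by
      intro j'
      by_cases hj' : j' = j
      · subst hj'
        simp [hjS, adjMat_eq_one hadj]
      · simp only [if_neg hj']
        by_cases hj'S : j' ∈ S
        · by_cases ha : adj i j'
          · exact absurd (huniq j' hj'S ha) hj'
          · simp [adjMat_eq_zero ha]
        · simp [hj'S]
    rw [Finset.sum_congr rfl (fun j' _ => this j')]
    simp

/-- In the cycle digraph, the complementarity spectrum is contained in {0,1}. -/
lemma cycle_subset (hcard : 2 ≤ Fintype.card V)
    (c : ZMod (Fintype.card V) ≃ V)
    (hc : ∀ u w : V, adj u w ↔ c.symm w = c.symm u + 1) {lam : ℝ}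
    (h : isComplEig (adjMat adj) lam) : lam = 0 ∨ lam = 1 := by
  classical
  obtain ⟨x, hx, hx0, hge, hsum⟩ := h
  -- each term in hsum is nonneg, hence zero
  have hterm : ∀ i, x i * ((adjMat adj).mulVec x - lam • x) i = 0 := by
    have := (Finset.sum_eq_zero_iff_of_nonneg (fun i _ => mul_nonneg (hx0 i) (hge i))).mp hsum
    exact fun i => this i (Finset.mem_univ i)
  -- compute mulVec
  have hmv : ∀ u : V, (adjMat adj).mulVec x u = x (c (c.symm u + 1)) := by
    intro u
    rw [mulVec_apply']
    have : ∀ j : V, adjMat adj u j * x j = if j = c (c.symm u + 1) then x j else 0 := by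
      intro j
      by_cases hj : j = c (c.symm u + 1)
      · have : adj u j := by
          rw [hc]
          rw [hj]
          simp
        subst hj
        simp [adjMat_eq_one this]
      · have : ¬ adj u j := by
          rw [hc]
          intro hcontra
          exact hj (by rw [← hcontra]; simp)
        simp [hj, adjMat_eq_zero this]
    rw [Finset.sum_congr rfl (fun j _ => this j), Finset.sum_ite_eq' Finset.univ]
    simp
  set y : ZMod (Fintype.card V) → ℝ := fun a => x (c a) with hy
  have hy0 : ∀ a, 0 ≤ y a := fun a => hx0 (c a)
  have hstep : ∀ a, y a ≠ 0 → y (a + 1) = lam * y a := by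
    intro a ha
    have h1 := hterm (c a)
    simp only [Pi.sub_apply, Pi.smul_apply, smul_eq_mul] at h1
    rw [hmv (c a)] at h1
    simp only [Equiv.symm_apply_apply] at h1
    have : x (c (a + 1)) - lam * x (c a) = 0 := by
      rcases mul_eq_zero.mp h1 with h | h
      · exact absurd h ha
      · exact h
    have := sub_eq_zero.mp this
    simpa [hy] using this
  obtain ⟨v, hv⟩ : ∃ v, x v ≠ 0 := by
    by_contra hcon
    push_neg at hcon
    exact hx (funext fun v => hcon v)
  set a0 := c.symm v with ha0
  have hy0' : y a0 ≠ 0 := by simpa [hy, ha0] using hv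
  have hy0pos : 0 < y a0 := lt_of_le_of_ne (hy0 a0) (Ne.symm hy0')
  rcases lt_trichotomy lam 0 with hl | hl | hl
  · exfalso
    have := hstep a0 hy0'
    have hneg : y (a0 + 1) < 0 := by
      rw [this]
      exact mul_neg_of_neg_of_pos hl hy0pos
    exact absurd (hy0 (a0 + 1)) (not_le.mpr hneg)
  · exact Or.inl hl
  · right
    have hiter : ∀ t : ℕ, y (a0 + t) = lam ^ t * y a0 := by
      intro t
      induction t with
      | zero => simp
      | succ t ih =>
        have hne : y (a0 + t) ≠ 0 := by
          rw [ih]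
          positivity
        have := hstep _ hne
        push_cast
        rw [show a0 + ((t : ZMod (Fintype.card V)) + 1) = (a0 + t) + 1 by ring, this, ih]
        ring
    have hn := hiter (Fintype.card V)
    rw [ZMod.natCast_self, add_zero] at hn
    have hpow : lam ^ (Fintype.card V) = 1 := by
      have h2 : lam ^ (Fintype.card V) * y a0 = 1 * y a0 := by rw [← hn]; ring
      exact mul_right_cancel₀ hy0' h2
    -- lam > 0, lam^n = 1, n ≥ 1 ⇒ lam = 1
    rcases lt_trichotomy lam 1 with h1 | h1 | h1
    · exfalso
      have : lam ^ (Fintype.card V) < 1 := pow_lt_one₀ hl.le h1 (by omega)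
      rw [hpow] at this; exact lt_irrefl _ this
    · exact h1
    · exfalso
      have : 1 < lam ^ (Fintype.card V) := one_lt_pow₀ h1 (by omega)
      rw [hpow] at this; exact lt_irrefl _ this

/-- In the cycle digraph, 1 is a complementarity eigenvalue (all-ones vector). -/
lemma cycle_one_mem [Nonempty V]
    (c : ZMod (Fintype.card V) ≃ V)
    (hc : ∀ u w : V, adj u w ↔ c.symm w = c.symm u + 1) :
    isComplEig (adjMat adj) 1 := by
  classical
  apply isComplEig_of (fun _ => 1)
  · intro h
    have := congrFun h (Classical.arbitrary V)
    simp at this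
  · intro i; norm_num
  · intro u _
    rw [mulVec_apply']
    have : ∀ j : V, adjMat adj u j * 1 = if j = c (c.symm u + 1) then 1 else 0 := by
      intro j
      by_cases hj : j = c (c.symm u + 1)
      · have : adj u j := by rw [hc, hj]; simp
        subst hj
        simp [adjMat_eq_one this]
      · have : ¬ adj u j := by
          rw [hc]
          intro hcontra
          exact hj (by rw [← hcontra]; simp)
        simp [hj, adjMat_eq_zero this]
    rw [Finset.sum_congr rfl (fun j _ => this j), Finset.sum_ite_eq' Finset.univ]
    simp


lemma unique_out_cycle (hcard : 2 ≤ Fintype.card V)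
    (hsconn : ∀ u v : V, Relation.ReflTransGen adj u v)
    (huniq : ∀ u j1 j2 : V, adj u j1 → adj u j2 → j1 = j2) :
    ∃ c : ZMod (Fintype.card V) ≃ V, ∀ u w : V, adj u w ↔ c.symm w = c.symm u + 1 := by
  classical
  haveI : Nonempty V := Fintype.card_pos_iff.mp (by omega)
  set σ : V → V := fun u => (exists_out hcard hsconn u).choose with hσdef
  have hσ : ∀ u, adj u (σ u) := fun u => (exists_out hcard hsconn u).choose_spec
  have hadj_iff : ∀ u w, adj u w ↔ w = σ u := by
    intro u w
    exact ⟨fun h => huniq u w (σ u) h (hσ u), fun h => h ▸ hσ u⟩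
  have reach : ∀ a b : V, Relation.ReflTransGen adj a b → ∃ t : ℕ, σ^[t] a = b := by
    intro a b h
    induction h with
    | refl => exact ⟨0, rfl⟩
    | tail hab hbc ih =>
      obtain ⟨t, rfl⟩ := ih
      exact ⟨t + 1, by rw [Function.iterate_succ_apply', (hadj_iff _ _).mp hbc]⟩
  set s := Classical.arbitrary V with hsdef
  obtain ⟨t, ht⟩ := reach (σ s) s (hsconn (σ s) s)
  have hper : σ^[t + 1] s = s := by rw [Function.iterate_succ_apply]; exact ht
  obtain ⟨k, hkpos, f, hfinj, hfsucc, hfnat, hf0⟩ := cyclic_param σ s (t + 1) (by omega) hper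
  haveI : NeZero k := ⟨hkpos.ne'⟩
  have hfsurj : Function.Surjective f := by
    intro v
    obtain ⟨t', ht'⟩ := reach s v (hsconn s v)
    exact ⟨(t' : ZMod k), by rw [← hfnat, ht']⟩
  have hbij : Function.Bijective f := ⟨hfinj, hfsurj⟩
  have hk : k = Fintype.card V := by
    have := Fintype.card_of_bijective hbij
    rwa [ZMod.card] at this
  subst hk
  refine ⟨Equiv.ofBijective f hbij, ?_⟩
  intro u w
  set c := Equiv.ofBijective f hbij with hcdef
  have hcf : ∀ a, c a = f a := fun a => rfl
  have hkey : c (c.symm u + 1) = σ u := by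
    rw [hcf, hfsucc, ← hcf, Equiv.apply_symm_apply]
  rw [hadj_iff u w, Equiv.symm_apply_eq, hkey]

-- matrix power positivity
lemma pow_adj_nonneg : ∀ (m : ℕ) (i j : V), 0 ≤ ((adjMat adj) ^ m) i j := by
  intro m
  induction m with
  | zero => intro i j; simp [Matrix.one_apply]; split <;> norm_num
  | succ m ih =>
    intro i j
    rw [pow_succ, Matrix.mul_apply]
    exact Finset.sum_nonneg fun w _ => mul_nonneg (ih i w) (adjMat_nonneg w j)

lemma exists_pow_pos {u v : V} (h : Relation.ReflTransGen adj u v) :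
    ∃ m : ℕ, 0 < ((adjMat adj) ^ m) u v := by
  induction h with
  | refl => exact ⟨0, by simp [Matrix.one_apply]⟩
  | @tail b c hab hbc ih =>
    obtain ⟨m, hm⟩ := ih
    refine ⟨m + 1, ?_⟩
    rw [pow_succ, Matrix.mul_apply]
    apply Finset.sum_pos' (fun w _ => mul_nonneg (pow_adj_nonneg m u w) (adjMat_nonneg w c))
    exact ⟨b, Finset.mem_univ b, mul_pos hm (adjMat_pos_iff.mpr hbc)⟩

lemma onePlusPow_nonneg : ∀ (N : ℕ) (i j : V), 0 ≤ ((1 + adjMat adj) ^ N) i j := by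
  intro N
  induction N with
  | zero => intro i j; simp [Matrix.one_apply]; split <;> norm_num
  | succ N ih =>
    intro i j
    rw [pow_succ, Matrix.mul_apply]
    refine Finset.sum_nonneg fun w _ => mul_nonneg (ih i w) ?_
    simp only [Matrix.add_apply, Matrix.one_apply]
    have := adjMat_nonneg (adj := adj) w j
    split <;> linarith

lemma onePlusPow_pos {N : ℕ} {u v : V} (h : ∃ m ≤ N, 0 < ((adjMat adj) ^ m) u v) :
    0 < ((1 + adjMat adj) ^ N) u v := by
  induction N generalizing v with
  | zero =>
    obtain ⟨m, hm, hpos⟩ := h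
    interval_cases m
    simpa using hpos
  | succ N ih =>
    obtain ⟨m, hm, hpos⟩ := h
    have expand : ((1 + adjMat adj) ^ (N + 1)) u v
        = ((1 + adjMat adj) ^ N) u v
          + ∑ w, ((1 + adjMat adj) ^ N) u w * adjMat adj w v := by
      rw [pow_succ, Matrix.mul_apply]
      have hterm : ∀ j : V, ((1 + adjMat adj) ^ N) u j * (1 + adjMat adj) j v
          = ((1 + adjMat adj) ^ N) u j * (1 : Matrix V V ℝ) j v
            + ((1 + adjMat adj) ^ N) u j * adjMat adj j v := by
        intro j
        rw [Matrix.add_apply]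
        ring
      rw [Finset.sum_congr rfl (fun j _ => hterm j), Finset.sum_add_distrib]
      congr 1
      simp [Matrix.one_apply, mul_ite, Finset.sum_ite_eq' Finset.univ v]
    rw [expand]
    rcases Nat.lt_or_ge m (N + 1) with hmN | hmN
    · have h1 := ih ⟨m, by omega, hpos⟩
      have h2 : 0 ≤ ∑ w, ((1 + adjMat adj) ^ N) u w * adjMat adj w v :=
        Finset.sum_nonneg fun w _ => mul_nonneg (onePlusPow_nonneg N u w) (adjMat_nonneg w v)
      linarith
    · have hm' : m = N + 1 := by omega
      subst hm'
      rw [pow_succ, Matrix.mul_apply] at hpos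
      obtain ⟨w, -, hw⟩ : ∃ w ∈ Finset.univ, 0 < (adjMat adj ^ N) u w * adjMat adj w v := by
        by_contra hc
        push_neg at hc
        have : ∑ w, (adjMat adj ^ N) u w * adjMat adj w v ≤ 0 :=
          Finset.sum_nonpos fun w hwu => hc w hwu
        linarith
      have h1 : 0 < (adjMat adj ^ N) u w ∧ 0 < adjMat adj w v := by
        rcases mul_pos_iff.mp hw with h | ⟨h1, h2⟩
        · exact h
        · exact absurd h1 (not_lt.mpr (pow_adj_nonneg N u w))
      have h2 : 0 < ∑ w, ((1 + adjMat adj) ^ N) u w * adjMat adj w v := by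
        apply Finset.sum_pos'
          (fun w _ => mul_nonneg (onePlusPow_nonneg N u w) (adjMat_nonneg w v))
        exact ⟨w, Finset.mem_univ w,
          mul_pos (ih ⟨N, le_rfl, h1.1⟩) h1.2⟩
      have h3 : 0 ≤ ((1 + adjMat adj) ^ N) u v := onePlusPow_nonneg N u v
      linarith


lemma perron_gt_one (hcard : 2 ≤ Fintype.card V)
    (hsconn : ∀ u v : V, Relation.ReflTransGen adj u v)
    {v0 j1 j2 : V} (ha1 : adj v0 j1) (ha2 : adj v0 j2) (hj : j1 ≠ j2) :
    ∃ lam : ℝ, 1 < lam ∧ isComplEig (adjMat adj) lam := by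
  classical
  haveI : Nonempty V := Fintype.card_pos_iff.mp (by omega)
  set A := adjMat adj with hA
  set N : ℕ := Finset.univ.sup
    (fun p : V × V => (exists_pow_pos (adj := adj) (hsconn p.1 p.2)).choose) with hN
  set B := (1 + A) ^ N with hB
  have hBpos : ∀ u v : V, 0 < B u v := by
    intro u v
    apply onePlusPow_pos
    refine ⟨(exists_pow_pos (adj := adj) (hsconn u v)).choose, ?_,
      (exists_pow_pos (adj := adj) (hsconn u v)).choose_spec⟩
    exact Finset.le_sup (f := fun p : V × V =>
      (exists_pow_pos (adj := adj) (hsconn p.1 p.2)).choose) (Finset.mem_univ (u, v))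
  set M : ℝ := ∑ i, ∑ j, A i j with hM
  have hMnn : 0 ≤ M :=
    Finset.sum_nonneg fun i _ => Finset.sum_nonneg fun j _ => adjMat_nonneg i j
  -- the bound lemma
  have hMbound : ∀ (lam : ℝ) (x : V → ℝ), (∀ i, 0 ≤ x i) → (∑ i, x i) = 1 →
      (∀ i, lam * x i ≤ A.mulVec x i) → lam ≤ M := by
    intro lam x hx0 hx1 hineq
    have hxle : ∀ j, x j ≤ 1 := by
      intro j
      rw [← hx1]
      exact Finset.single_le_sum (fun i _ => hx0 i) (Finset.mem_univ j)
    have h1 : lam = ∑ i, lam * x i := by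
      rw [← Finset.mul_sum, hx1, mul_one]
    rw [h1]
    calc ∑ i, lam * x i ≤ ∑ i, A.mulVec x i := Finset.sum_le_sum fun i _ => hineq i
      _ = ∑ i, ∑ j, A i j * x j := by rfl
      _ ≤ ∑ i, ∑ j, A i j := by
          refine Finset.sum_le_sum fun i _ => Finset.sum_le_sum fun j _ => ?_
          calc A i j * x j ≤ A i j * 1 := by
                have := adjMat_nonneg (adj := adj) i j
                exact mul_le_mul_of_nonneg_left (hxle j) this
            _ = A i j := mul_one _
  -- the compact feasible set
  set K : Set (ℝ × (V → ℝ)) := {q | 0 ≤ q.1 ∧ q.1 ≤ M ∧ (∀ i, 0 ≤ q.2 i) ∧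
    (∑ i, q.2 i) = 1 ∧ ∀ i, q.1 * q.2 i ≤ A.mulVec q.2 i} with hK
  have hsnd : ∀ i : V, Continuous (fun q : ℝ × (V → ℝ) => q.2 i) :=
    fun i => (continuous_apply i).comp continuous_snd
  have hc3 : IsClosed {q : ℝ × (V → ℝ) | ∀ i, 0 ≤ q.2 i} := by
    rw [Set.setOf_forall]
    exact isClosed_iInter fun i => isClosed_le continuous_const (hsnd i)
  have hc5 : IsClosed {q : ℝ × (V → ℝ) | ∀ i, q.1 * q.2 i ≤ A.mulVec q.2 i} := by
    rw [Set.setOf_forall]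
    refine isClosed_iInter fun i => isClosed_le (continuous_fst.mul (hsnd i)) ?_
    have : (fun q : ℝ × (V → ℝ) => A.mulVec q.2 i)
        = fun q : ℝ × (V → ℝ) => ∑ j, A i j * q.2 j := rfl
    rw [this]
    exact continuous_finset_sum _ fun j _ => continuous_const.mul (hsnd j)
  have hKclosed : IsClosed K := by
    have : K = {q : ℝ × (V → ℝ) | 0 ≤ q.1} ∩ ({q | q.1 ≤ M} ∩
        ({q : ℝ × (V → ℝ) | ∀ i, 0 ≤ q.2 i} ∩ ({q | (∑ i, q.2 i) = 1} ∩
        {q : ℝ × (V → ℝ) | ∀ i, q.1 * q.2 i ≤ A.mulVec q.2 i}))) := rfl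
    rw [this]
    refine IsClosed.inter (isClosed_le continuous_const continuous_fst) ?_
    refine IsClosed.inter (isClosed_le continuous_fst continuous_const) ?_
    refine IsClosed.inter hc3 ?_
    exact IsClosed.inter
      (isClosed_eq (continuous_finset_sum _ fun i _ => hsnd i) continuous_const) hc5
  have hKsub : K ⊆ (Set.Icc (0:ℝ) M) ×ˢ Set.univ.pi (fun _ : V => Set.Icc (0:ℝ) 1) := by
    rintro ⟨lam, x⟩ ⟨h1, h2, h3, h4, h5⟩
    constructor
    · exact ⟨h1, h2⟩
    · intro i _
      refine ⟨h3 i, ?_⟩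
      rw [← h4]
      exact Finset.single_le_sum (fun j _ => h3 j) (Finset.mem_univ i)
  have hKcomp : IsCompact K :=
    IsCompact.of_isClosed_subset
      (isCompact_Icc.prod (isCompact_univ_pi fun _ => isCompact_Icc)) hKclosed hKsub
  have hKne : K.Nonempty := by
    refine ⟨(0, fun _ => (Fintype.card V : ℝ)⁻¹), le_refl 0, hMnn, fun i => by positivity, ?_, ?_⟩
    · rw [Finset.sum_const, Finset.card_univ, nsmul_eq_mul]
      field_simp
    · intro i
      rw [zero_mul]
      exact mulVec_nonneg (fun i j => adjMat_nonneg i j) (fun j => by positivity) i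
  obtain ⟨⟨lam, x⟩, hmem, hmax⟩ := hKcomp.exists_isMaxOn hKne continuous_fst.continuousOn
  obtain ⟨hlam0, hlamM, hx0, hx1, hineq⟩ := hmem
  have hmax' : ∀ q ∈ K, q.1 ≤ lam := fun q hq => hmax hq
  -- derive the eigen-equation
  have heig : ∀ i, A.mulVec x i = lam * x i := by
    by_contra hcon
    push_neg at hcon
    set d : V → ℝ := fun i => A.mulVec x i - lam * x i with hd
    have hd0 : ∀ i, 0 ≤ d i := fun i => sub_nonneg.mpr (hineq i)
    have hdne : d ≠ 0 := by
      obtain ⟨i0, hi0⟩ := hcon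
      intro h
      apply hi0
      have := congrFun h i0
      simp only [hd, Pi.zero_apply] at this
      linarith [this]
    set y := B.mulVec x with hy
    have hxex : ∃ j0, 0 < x j0 := by
      by_contra hc
      push_neg at hc
      have : ∑ i, x i = 0 := le_antisymm (Finset.sum_nonpos fun i _ => hc i)
        (Finset.sum_nonneg fun i _ => hx0 i)
      rw [hx1] at this
      norm_num at this
    have hypos : ∀ i, 0 < y i := by
      intro i
      obtain ⟨j0, hj0⟩ := hxex
      apply Finset.sum_pos' (fun j _ => mul_nonneg (hBpos i j).le (hx0 j))
      exact ⟨j0, Finset.mem_univ j0, mul_pos (hBpos i j0) hj0⟩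
    have hdex : ∃ j0, 0 < d j0 := by
      by_contra hc
      push_neg at hc
      apply hdne
      funext i
      exact le_antisymm (hc i) (hd0 i)
    have hBdpos : ∀ i, 0 < B.mulVec d i := by
      intro i
      obtain ⟨j0, hj0⟩ := hdex
      apply Finset.sum_pos' (fun j _ => mul_nonneg (hBpos i j).le (hd0 j))
      exact ⟨j0, Finset.mem_univ j0, mul_pos (hBpos i j0) hj0⟩
    have hcomm : A * B = B * A := by
      rw [hB]
      exact (Commute.pow_right (((Commute.one_right A).add_right (Commute.refl A))) N).eq
    have key : ∀ i, A.mulVec y i - lam * y i = B.mulVec d i := by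
      intro i
      have h1 : A.mulVec y = B.mulVec (A.mulVec x) := by
        rw [hy, Matrix.mulVec_mulVec, Matrix.mulVec_mulVec, hcomm]
      have h2 : B.mulVec d = B.mulVec (A.mulVec x) - lam • B.mulVec x := by
        have : d = A.mulVec x - lam • x := by
          funext i; simp [hd, Pi.sub_apply, Pi.smul_apply, smul_eq_mul]
        rw [this, Matrix.mulVec_sub, Matrix.mulVec_smul]
      rw [h2, h1]
      simp [hy, Pi.sub_apply, Pi.smul_apply, smul_eq_mul]
    set eps : ℝ := Finset.univ.inf' Finset.univ_nonempty (fun i => B.mulVec d i / y i)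
      with heps
    have hepspos : 0 < eps := by
      rw [heps, Finset.lt_inf'_iff]
      exact fun i _ => div_pos (hBdpos i) (hypos i)
    have hepsle : ∀ i, (lam + eps) * y i ≤ A.mulVec y i := by
      intro i
      have h1 : eps ≤ B.mulVec d i / y i := Finset.inf'_le _ (Finset.mem_univ i)
      have h2 : eps * y i ≤ B.mulVec d i := (le_div_iff₀ (hypos i)).mp h1
      have h3 := key i
      nlinarith [hypos i]
    -- normalize y
    set s : ℝ := ∑ i, y i with hs
    have hspos : 0 < s := Finset.sum_pos (fun i _ => hypos i) Finset.univ_nonempty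
    set y' : V → ℝ := fun i => s⁻¹ * y i with hy'
    have hy'0 : ∀ i, 0 ≤ y' i := fun i => mul_nonneg (by positivity) (hypos i).le
    have hy'1 : ∑ i, y' i = 1 := by
      rw [hy']
      rw [← Finset.mul_sum, ← hs]
      field_simp
    have hy'ineq : ∀ i, (lam + eps) * y' i ≤ A.mulVec y' i := by
      intro i
      have : A.mulVec y' = s⁻¹ • A.mulVec y := by
        have h0 : y' = s⁻¹ • y := rfl
        rw [h0, Matrix.mulVec_smul]
      rw [this]
      simp only [Pi.smul_apply, smul_eq_mul, hy']
      have := hepsle i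
      have hinv : 0 ≤ s⁻¹ := by positivity
      nlinarith
    have hmemK : ((lam + eps, y') : ℝ × (V → ℝ)) ∈ K := by
      refine ⟨by positivity, ?_, hy'0, hy'1, hy'ineq⟩
      exact hMbound _ _ hy'0 hy'1 hy'ineq
    have := hmax' _ hmemK
    simp only at this
    linarith
  -- x is strictly positive
  have hxex : ∃ j0, 0 < x j0 := by
    by_contra hc
    push_neg at hc
    have : ∑ i, x i = 0 := le_antisymm (Finset.sum_nonpos fun i _ => hc i)
      (Finset.sum_nonneg fun i _ => hx0 i)
    rw [hx1] at this
    norm_num at this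
  have hstep : (1 + A).mulVec x = (1 + lam) • x := by
    funext i
    rw [Matrix.add_mulVec, Matrix.one_mulVec]
    simp only [Pi.add_apply, Pi.smul_apply, smul_eq_mul]
    rw [heig i]
    ring
  have hBx : ∀ m : ℕ, ((1 + A) ^ m).mulVec x = ((1 + lam) ^ m) • x := by
    intro m
    induction m with
    | zero => simp [Matrix.one_mulVec]
    | succ m ih =>
      rw [pow_succ, ← Matrix.mulVec_mulVec, hstep, Matrix.mulVec_smul, ih, smul_smul]
      congr 1
      ring
  have hxpos : ∀ i, 0 < x i := by
    intro i
    have h1 : 0 < B.mulVec x i := by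
      obtain ⟨j0, hj0⟩ := hxex
      apply Finset.sum_pos' (fun j _ => mul_nonneg (hBpos i j).le (hx0 j))
      exact ⟨j0, Finset.mem_univ j0, mul_pos (hBpos i j0) hj0⟩
    have h2 : B.mulVec x i = (1 + lam) ^ N * x i := by
      rw [hB, hBx N]
      simp
    have hpow : 0 < (1 + lam) ^ N := by positivity
    rw [h2] at h1
    by_contra hc
    push_neg at hc
    nlinarith
  -- lam > 1
  have hlamval : lam = ∑ j, (∑ i, A i j) * x j := by
    calc lam = lam * ∑ i, x i := by rw [hx1, mul_one]
      _ = ∑ i, lam * x i := Finset.mul_sum _ _ _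
      _ = ∑ i, A.mulVec x i := by
          exact Finset.sum_congr rfl fun i _ => (heig i).symm
      _ = ∑ i, ∑ j, A i j * x j := rfl
      _ = ∑ j, ∑ i, A i j * x j := Finset.sum_comm
      _ = ∑ j, (∑ i, A i j) * x j := by
          exact Finset.sum_congr rfl fun j _ => (Finset.sum_mul _ _ _).symm
  have h_in : ∀ j, (1:ℝ) ≤ ∑ i, A i j := by
    intro j
    obtain ⟨i0, hi0⟩ := exists_in hcard hsconn j
    calc (1:ℝ) = A i0 j := (adjMat_eq_one hi0).symm
      _ ≤ ∑ i, A i j := Finset.single_le_sum (fun i _ => adjMat_nonneg i j)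
          (Finset.mem_univ i0)
  have h_out : ∀ i, (1:ℝ) ≤ ∑ j, A i j := by
    intro i
    obtain ⟨j0, hj0⟩ := exists_out hcard hsconn i
    calc (1:ℝ) = A i j0 := (adjMat_eq_one hj0).symm
      _ ≤ ∑ j, A i j := Finset.single_le_sum (fun j _ => adjMat_nonneg i j)
          (Finset.mem_univ j0)
  have h_out_v0 : (2:ℝ) ≤ ∑ j, A v0 j := by
    have hpair : ∑ j ∈ ({j1, j2} : Finset V), A v0 j = A v0 j1 + A v0 j2 :=
      Finset.sum_pair hj
    calc (2:ℝ) = A v0 j1 + A v0 j2 := by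
          rw [show A v0 j1 = 1 from adjMat_eq_one ha1,
            show A v0 j2 = 1 from adjMat_eq_one ha2]; norm_num
      _ = ∑ j ∈ ({j1, j2} : Finset V), A v0 j := hpair.symm
      _ ≤ ∑ j, A v0 j := Finset.sum_le_sum_of_subset_of_nonneg
          (Finset.subset_univ _) (fun j _ _ => adjMat_nonneg v0 j)
  have h_tot : ∑ j, ∑ i, A i j = ∑ i, ∑ j, A i j := Finset.sum_comm
  have h_card_sum : (Fintype.card V : ℝ) + 1 ≤ ∑ i, ∑ j, A i j := by
    have he : ∑ i, ∑ j, A i j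
        = (∑ j, A v0 j) + ∑ i ∈ Finset.univ.erase v0, ∑ j, A i j :=
      (Finset.add_sum_erase _ _ (Finset.mem_univ v0)).symm
    have hcount : ((Fintype.card V : ℝ) - 1) ≤ ∑ i ∈ Finset.univ.erase v0, ∑ j, A i j := by
      have h1 : ∀ i ∈ Finset.univ.erase v0, (1:ℝ) ≤ ∑ j, A i j := fun i _ => h_out i
      have h2 := Finset.card_nsmul_le_sum (Finset.univ.erase v0) _ 1 h1
      rw [Finset.card_erase_of_mem (Finset.mem_univ v0), Finset.card_univ] at h2
      have h3 : ((Fintype.card V - 1 : ℕ) : ℝ) = (Fintype.card V : ℝ) - 1 := by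
        have : 1 ≤ Fintype.card V := by omega
        push_cast [Nat.cast_sub this]
        ring
      rw [nsmul_eq_mul, mul_one] at h2
      rw [← h3]
      exact h2
    linarith
  obtain ⟨j0, hj0⟩ : ∃ j0, (1:ℝ) < ∑ i, A i j0 := by
    by_contra hc
    push_neg at hc
    have : ∑ j, ∑ i, A i j ≤ (Fintype.card V : ℝ) := by
      calc ∑ j, ∑ i, A i j ≤ ∑ _j : V, (1:ℝ) := Finset.sum_le_sum fun j _ => hc j
        _ = (Fintype.card V : ℝ) := by
            rw [Finset.sum_const, Finset.card_univ, nsmul_eq_mul, mul_one]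
    rw [h_tot] at this
    linarith
  have hlamgt : 1 < lam := by
    have hterm : ∀ j, 0 ≤ ((∑ i, A i j) - 1) * x j := fun j =>
      mul_nonneg (by linarith [h_in j]) (hxpos j).le
    have hsingle : ((∑ i, A i j0) - 1) * x j0
        ≤ ∑ j, ((∑ i, A i j) - 1) * x j :=
      Finset.single_le_sum (fun j _ => hterm j) (Finset.mem_univ j0)
    have hpos : 0 < ((∑ i, A i j0) - 1) * x j0 :=
      mul_pos (by linarith) (hxpos j0)
    have hsplit : ∑ j, ((∑ i, A i j) - 1) * x j = lam - 1 := by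
      have : ∑ j, ((∑ i, A i j) - 1) * x j
          = (∑ j, (∑ i, A i j) * x j) - ∑ j, x j := by
        rw [← Finset.sum_sub_distrib]
        exact Finset.sum_congr rfl fun j _ => by ring
      rw [this, ← hlamval, hx1]
    linarith [hsplit ▸ lt_of_lt_of_le hpos hsingle]
  refine ⟨lam, hlamgt, ?_⟩
  apply isComplEig_of x ?_ (fun i => hx0 i) (fun i _ => heig i)
  intro h
  rw [h] at hx1
  simp at hx1


end Aux

theorem stmt8 {V : Type*} [Fintype V] (adj : V → V → Prop) (hirr : Irreflexive adj)
    (hcard : 2 ≤ Fintype.card V)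
    (hsconn : ∀ u v : V, Relation.ReflTransGen adj u v) :
    [{lam : ℝ | isComplEig (adjMat adj) lam} = {0, 1},
     ∃ a b : ℝ, a ≠ b ∧ {lam : ℝ | isComplEig (adjMat adj) lam} = {a, b},
     ∃ c : ZMod (Fintype.card V) ≃ V, ∀ u w : V,
        adj u w ↔ c.symm w = c.symm u + 1].TFAE := by
  classical
  haveI : Nonempty V := Fintype.card_pos_iff.mp (by omega)
  tfae_have 1 → 2 := by
    intro h1
    exact ⟨0, 1, by norm_num, h1⟩
  tfae_have 3 → 1 := by
    rintro ⟨c, hc⟩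
    ext lam
    simp only [Set.mem_setOf_eq, Set.mem_insert_iff, Set.mem_singleton_iff]
    constructor
    · exact cycle_subset hcard c hc
    · rintro (rfl | rfl)
      · exact zero_mem hirr (Classical.arbitrary V)
      · exact cycle_one_mem c hc
  tfae_have 2 → 3 := by
    rintro ⟨a, b, hab, hPi⟩
    by_contra h3
    have hnotuniq : ¬ ∀ u j1 j2 : V, adj u j1 → adj u j2 → j1 = j2 := by
      intro huniq
      exact h3 (unique_out_cycle hcard hsconn huniq)
    push_neg at hnotuniq
    obtain ⟨v0, j1, j2, ha1, ha2, hj⟩ := hnotuniq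
    obtain ⟨lam, hlam, hmem⟩ := perron_gt_one hcard hsconn ha1 ha2 hj
    have h0 : (0:ℝ) ∈ {lam : ℝ | isComplEig (adjMat adj) lam} :=
      zero_mem hirr (Classical.arbitrary V)
    have h1 : (1:ℝ) ∈ {lam : ℝ | isComplEig (adjMat adj) lam} :=
      one_mem hirr (exists_out hcard hsconn)
    have hl : lam ∈ {lam : ℝ | isComplEig (adjMat adj) lam} := hmem
    rw [hPi] at h0 h1 hl
    simp only [Set.mem_insert_iff, Set.mem_singleton_iff] at h0 h1 hl
    rcases h0 with rfl | rfl
    · rcases h1 with h1 | rfl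
      · norm_num at h1
      · rcases hl with hl | hl
        · rw [hl] at hlam; norm_num at hlam
        · rw [hl] at hlam; norm_num at hlam
    · rcases h1 with rfl | h1
      · rcases hl with hl | hl
        · rw [hl] at hlam; norm_num at hlam
        · rw [hl] at hlam; norm_num at hlam
      · norm_num at h1
  tfae_finish
end
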